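/- Let G be a connected simple graph with diameter 2. Then for every positive weight function μ on V_G, the full doubling constant C_μ equals the restricted constant C_μ^0 = sup_v μ(B(v,1))/μ(v). Consequently C_G = C_G^0. -/
import Mathlib


/-- The closed ball of center `v` and real radius `r` in the path metric of `G`. -/
noncomputable def graphBall {V : Type*} [Fintype V] (G : SimpleGraph V) (v : V) (r : ℝ) :
    Finset V :=
  Finset.univ.filter (fun w => (G.dist v w : ℝ) ≤ r)

lemma mem_graphBall {V : Type*} [Fintype V] {G : SimpleGraph V} {v w : V} {r : ℝ} :
    w ∈ graphBall G v r ↔ (G.dist v w : ℝ) ≤ r := by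
  simp [graphBall]

lemma graphBall_mono {V : Type*} [Fintype V] {G : SimpleGraph V} {v : V} {r s : ℝ}
    (h : r ≤ s) : graphBall G v r ⊆ graphBall G v s := fun w hw =>
  mem_graphBall.mpr ((mem_graphBall.mp hw).trans h)

/-- the middle-vertex lemma -/
lemma middle_vertex {V : Type*} [Fintype V] {G : SimpleGraph V} (hG : G.Connected)
    (hdiam₁ : ∀ v w : V, G.dist v w ≤ 2) (v u : V) :
    ∃ w : V, G.dist v w ≤ 1 ∧ G.dist w u ≤ 1 := by
  have hle := hdiam₁ v u
  by_cases h0 : G.dist v u = 0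
  · have hvu : v = u := hG.dist_eq_zero_iff.mp h0
    exact ⟨v, by simp [SimpleGraph.dist_self], by rw [hvu]; simp [SimpleGraph.dist_self]⟩
  by_cases h1 : G.dist v u = 1
  · exact ⟨u, h1.le, by simp [SimpleGraph.dist_self]⟩
  have h2 : G.dist v u = 2 := by omega
  obtain ⟨p, hp⟩ := (hG.preconnected v u).exists_walk_length_eq_dist
  rw [h2] at hp
  refine ⟨p.getVert 1, ?_, ?_⟩
  · have hadj : G.Adj v (p.getVert 1) := by
      have := p.adj_getVert_succ (i := 0) (by omega)
      simpa [p.getVert_zero] using this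
    exact (SimpleGraph.dist_eq_one_iff_adj.mpr hadj).le
  · have hadj : G.Adj (p.getVert 1) u := by
      have h3 := p.adj_getVert_succ (i := 1) (by omega)
      have h4 : p.getVert 2 = u := by rw [← hp]; exact p.getVert_length
      rwa [h4] at h3
    exact (SimpleGraph.dist_eq_one_iff_adj.mpr hadj).le

lemma key {V : Type*} [Fintype V] {G : SimpleGraph V} (hG : G.Connected)
    (hdiam₁ : ∀ v w : V, G.dist v w ≤ 2)
    (μ : V → ℝ) (hμ : ∀ v, 0 < μ v) :
    (⨆ v : V, ⨆ r : {r : ℝ // 0 ≤ r},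
        (∑ w ∈ graphBall G v (2 * (r : ℝ)), μ w) / (∑ w ∈ graphBall G v (r : ℝ), μ w)) =
      ⨆ v : V, (∑ w ∈ graphBall G v 1, μ w) / (∑ w ∈ graphBall G v 0, μ w) := by
  classical
  have hne : Nonempty V := hG.nonempty
  -- ball of radius 0 is the singleton
  have hzero : ∀ v : V, graphBall G v 0 = {v} := by
    intro v
    ext w
    simp only [mem_graphBall, Finset.mem_singleton]
    constructor
    · intro h
      have : G.dist v w = 0 := by exact_mod_cast le_antisymm (by exact_mod_cast h) (Nat.zero_le _)
      exact (hG.dist_eq_zero_iff.mp this).symm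
    · rintro rfl
      simp
  -- small real radius gives singleton
  have hsmall : ∀ (v : V) (r : ℝ), r < 1 → graphBall G v r ⊆ {v} := by
    intro v r hr w hw
    have h := mem_graphBall.mp hw
    have : G.dist v w = 0 := by
      have : (G.dist v w : ℝ) < 1 := h.trans_lt hr
      exact_mod_cast Nat.lt_one_iff.mp (by exact_mod_cast this)
    simp [Finset.mem_singleton, (hG.dist_eq_zero_iff.mp this).symm]
  have hsub1 : ∀ (v : V) (r : ℝ), r < 2 → graphBall G v r ⊆ graphBall G v 1 := by
    intro v r hr w hw
    have h := mem_graphBall.mp hw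
    have h2 : G.dist v w < 2 := by exact_mod_cast h.trans_lt hr
    have h3 : G.dist v w ≤ 1 := by omega
    exact mem_graphBall.mpr (by exact_mod_cast h3)
  have hself : ∀ (v : V) (r : ℝ), 0 ≤ r → v ∈ graphBall G v r := by
    intro v r hr
    exact mem_graphBall.mpr (by rw [SimpleGraph.dist_self]; exact_mod_cast hr)
  have hsumpos : ∀ (v : V) (r : ℝ), 0 ≤ r → 0 < ∑ w ∈ graphBall G v r, μ w := by
    intro v r hr
    exact Finset.sum_pos (fun i _ => hμ i) ⟨v, hself v r hr⟩
  have hsumpos1 : ∀ v : V, 0 < ∑ w ∈ graphBall G v 1, μ w := fun v => hsumpos v 1 one_pos.le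
  set f : V → ℝ := fun v => (∑ w ∈ graphBall G v 1, μ w) / (∑ w ∈ graphBall G v 0, μ w) with hf
  set S : ℝ := ⨆ v : V, f v with hS
  have hfv : ∀ v, f v = (∑ w ∈ graphBall G v 1, μ w) / μ v := by
    intro v; rw [hf]; simp [hzero v]
  have hfS : ∀ v, f v ≤ S := fun v => le_ciSup (Set.Finite.bddAbove (Set.finite_range f)) v
  have hB1 : ∀ w : V, (∑ u ∈ graphBall G w 1, μ u) ≤ S * μ w := by
    intro w
    have := hfS w
    rw [hfv w, div_le_iff₀ (hμ w)] at this
    linarith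
  -- covering: total mass bounded by S times mass of unit ball
  have hcover : ∀ v : V, (∑ u : V, μ u) ≤ S * ∑ w ∈ graphBall G v 1, μ w := by
    intro v
    choose g hg1 hg2 using middle_vertex hG hdiam₁ v
    have hmaps : ∀ u ∈ Finset.univ, g u ∈ graphBall G v 1 := fun u _ =>
      mem_graphBall.mpr (by exact_mod_cast hg1 u)
    calc (∑ u : V, μ u)
        = ∑ w ∈ graphBall G v 1, ∑ u ∈ Finset.univ.filter (fun u => g u = w), μ u :=
          (Finset.sum_fiberwise_of_maps_to hmaps μ).symm
      _ ≤ ∑ w ∈ graphBall G v 1, ∑ u ∈ graphBall G w 1, μ u := by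
          refine Finset.sum_le_sum fun w hw => ?_
          refine Finset.sum_le_sum_of_subset_of_nonneg ?_ (fun i _ _ => (hμ i).le)
          intro u hu
          simp only [Finset.mem_filter] at hu
          exact mem_graphBall.mpr (by rw [← hu.2]; exact_mod_cast hg2 u)
      _ ≤ ∑ w ∈ graphBall G v 1, S * μ w := Finset.sum_le_sum fun w _ => hB1 w
      _ = S * ∑ w ∈ graphBall G v 1, μ w := by rw [Finset.mul_sum]
  -- each ratio is at most S
  have hratio : ∀ (v : V) (r : {r : ℝ // 0 ≤ r}),
      (∑ w ∈ graphBall G v (2 * (r : ℝ)), μ w) / (∑ w ∈ graphBall G v (r : ℝ), μ w) ≤ S := by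
    rintro v ⟨r, hr⟩
    rcases lt_or_ge r 1 with h1 | h1
    · -- ball of radius r is {v}, ball of radius 2r ⊆ ball 1
      have hballr : graphBall G v r = {v} :=
        Finset.Subset.antisymm (hsmall v r h1) (Finset.singleton_subset_iff.mpr (hself v r hr))
      have hnum : (∑ w ∈ graphBall G v (2 * r), μ w) ≤ ∑ w ∈ graphBall G v 1, μ w :=
        Finset.sum_le_sum_of_subset_of_nonneg (hsub1 v (2 * r) (by linarith))
          (fun i _ _ => (hμ i).le)
      calc (∑ w ∈ graphBall G v (2 * r), μ w) / (∑ w ∈ graphBall G v r, μ w)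
          ≤ (∑ w ∈ graphBall G v 1, μ w) / (∑ w ∈ graphBall G v r, μ w) := by
            exact (div_le_div_iff_of_pos_right (hsumpos v r hr)).mpr hnum
        _ = f v := by rw [hballr, hfv v, Finset.sum_singleton]
        _ ≤ S := hfS v
    · -- r ≥ 1
      have hnum : (∑ w ∈ graphBall G v (2 * r), μ w) ≤ ∑ u : V, μ u :=
        Finset.sum_le_sum_of_subset_of_nonneg (Finset.subset_univ _) (fun i _ _ => (hμ i).le)
      have hden : (∑ w ∈ graphBall G v 1, μ w) ≤ ∑ w ∈ graphBall G v r, μ w :=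
        Finset.sum_le_sum_of_subset_of_nonneg (graphBall_mono h1) (fun i _ _ => (hμ i).le)
      have h2 : (∑ u : V, μ u) / (∑ w ∈ graphBall G v 1, μ w) ≤ S := by
        rw [div_le_iff₀ (hsumpos1 v)]
        exact hcover v
      calc (∑ w ∈ graphBall G v (2 * r), μ w) / (∑ w ∈ graphBall G v r, μ w)
          ≤ (∑ u : V, μ u) / (∑ w ∈ graphBall G v 1, μ w) :=
            div_le_div₀ (Finset.sum_nonneg fun i _ => (hμ i).le) hnum (hsumpos1 v) hden
        _ ≤ S := h2
  refine le_antisymm ?_ ?_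
  · exact ciSup_le fun v => ciSup_le fun r => hratio v r
  · refine ciSup_le fun v => ?_
    -- f v is attained at r = 1/2
    have hval : f v = (∑ w ∈ graphBall G v (2 * ((1:ℝ)/2)), μ w) /
        (∑ w ∈ graphBall G v ((1:ℝ)/2), μ w) := by
      have hballhalf : graphBall G v ((1:ℝ)/2) = {v} :=
        Finset.Subset.antisymm (hsmall v _ (by norm_num)) (Finset.singleton_subset_iff.mpr (hself v _ (by norm_num)))
      rw [hfv v, hballhalf, Finset.sum_singleton]
      norm_num
    rw [hval]
    have hb : BddAbove (Set.range fun r : {r : ℝ // 0 ≤ r} =>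
        (∑ w ∈ graphBall G v (2 * (r : ℝ)), μ w) / (∑ w ∈ graphBall G v (r : ℝ), μ w)) :=
      ⟨S, Set.forall_mem_range.mpr fun r => hratio v r⟩
    have h1 : (∑ w ∈ graphBall G v (2 * ((1:ℝ)/2)), μ w) / (∑ w ∈ graphBall G v ((1:ℝ)/2), μ w)
        ≤ ⨆ r : {r : ℝ // 0 ≤ r},
          (∑ w ∈ graphBall G v (2 * (r : ℝ)), μ w) / (∑ w ∈ graphBall G v (r : ℝ), μ w) :=
      le_ciSup hb ⟨(1:ℝ)/2, by norm_num⟩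
    refine h1.trans (le_ciSup (f := fun v : V => ⨆ r : {r : ℝ // 0 ≤ r},
      (∑ w ∈ graphBall G v (2 * (r : ℝ)), μ w) / (∑ w ∈ graphBall G v (r : ℝ), μ w))
      (Set.Finite.bddAbove (Set.finite_range _)) v)

theorem stmt_6 {V : Type*} [Fintype V] (G : SimpleGraph V) (hG : G.Connected)
    (hdiam₁ : ∀ v w : V, G.dist v w ≤ 2) (hdiam₂ : ∃ v w : V, G.dist v w = 2) :
    (∀ μ : V → ℝ, (∀ v, 0 < μ v) →
      (⨆ v : V, ⨆ r : {r : ℝ // 0 ≤ r},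
          (∑ w ∈ graphBall G v (2 * (r : ℝ)), μ w) / (∑ w ∈ graphBall G v (r : ℝ), μ w)) =
        ⨆ v : V, (∑ w ∈ graphBall G v 1, μ w) / (∑ w ∈ graphBall G v 0, μ w)) ∧
    (⨅ μ : {f : V → ℝ // ∀ v, 0 < f v},
        ⨆ v : V, ⨆ r : {r : ℝ // 0 ≤ r},
          (∑ w ∈ graphBall G v (2 * (r : ℝ)), μ.1 w) / (∑ w ∈ graphBall G v (r : ℝ), μ.1 w)) =
      ⨅ μ : {f : V → ℝ // ∀ v, 0 < f v},
        ⨆ v : V, (∑ w ∈ graphBall G v 1, μ.1 w) / (∑ w ∈ graphBall G v 0, μ.1 w) := by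
  constructor
  · exact fun μ hμ => key hG hdiam₁ μ hμ
  · exact iInf_congr fun μ => key hG hdiam₁ μ.1 μ.2
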